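/- Let (X,d) be a compact metric space, μ a Borel probability measure, T : X → X ergodic and measure-preserving, and U ⊆ X × X a Borel set whose topological boundary ∂U satisfies (μ × μ)(∂U) = 0. Then for μ-almost every x ∈ X, (1/n²) ∑_{i=1}^n ∑_{j=1}^n 1_U(T^i x, T^j x) → (μ × μ)(U) as n → ∞. -/

import Mathlib

/-!
Birkhoff's ergodic theorem for bounded observables (derived from the maximal ergodic theorem),
applied to a countable dense family of continuous functions, shows that μ-almost every point is
generic: the uniform measures on its initial orbit segments converge weakly to `μ`. Taking
products of weakly convergent probability measures, the uniform measures on the pairs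
`(T^[i] x, T^[j] x)` converge weakly to `μ × μ`, and the portmanteau theorem gives convergence on
the continuity set `U`.
-/

open MeasureTheory Filter Topology
open scoped ENNReal BoundedContinuousFunction

section MaximalErgodic

variable {α : Type*} {T : α → α} {g : α → ℝ}

lemma partialSups_birkhoffSum_nonneg (T : α → α) (g : α → ℝ) (n : ℕ) :
    0 ≤ partialSups (birkhoffSum T g) n := by
  simpa using le_partialSups_of_le (birkhoffSum T g) (Nat.zero_le n)

lemma partialSups_birkhoffSum_le_max (T : α → α) (g : α → ℝ) (n : ℕ) (x : α) :
    partialSups (birkhoffSum T g) n x ≤ max 0 (g x + partialSups (birkhoffSum T g) n (T x)) := by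
  rw [Pi.partialSups_apply]
  refine partialSups_le _ _ _ fun k hk => ?_
  cases k with
  | zero => simp
  | succ k =>
    rw [birkhoffSum_succ']
    exact le_max_of_le_right (add_le_add_right
      (le_partialSups_of_le (birkhoffSum T g) (by omega) (T x)) _)

variable [MeasurableSpace α] {μ : Measure α}

lemma measurable_partialSups {f : ℕ → α → ℝ} (hf : ∀ k, Measurable (f k)) (n : ℕ) :
    Measurable (partialSups f n) := by
  induction n with
  | zero => simpa using hf 0
  | succ n ih => rw [← Order.succ_eq_add_one, partialSups_succ]; exact ih.sup (hf _)

lemma integrable_partialSups {f : ℕ → α → ℝ} (hf : ∀ k, Integrable (f k) μ) (n : ℕ) :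
    Integrable (partialSups f n) μ := by
  induction n with
  | zero => simpa using hf 0
  | succ n ih => rw [← Order.succ_eq_add_one, partialSups_succ]; exact ih.sup (hf _)

lemma measurable_birkhoffSum (hT : Measurable T) (hg : Measurable g) (n : ℕ) :
    Measurable (birkhoffSum T g n) :=
  Finset.measurable_sum _ fun i _ => hg.comp (hT.iterate i)

lemma integrable_birkhoffSum (hT : MeasurePreserving T μ μ) (hg : Integrable g μ) (n : ℕ) :
    Integrable (birkhoffSum T g n) μ :=
  integrable_finsetSum _ fun i _ => (hT.iterate i).integrable_comp_of_integrable hg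

/-- Garsia's proof: on `{M > 0}` one has `M - M ∘ T ≤ g`, and `M - M ∘ T` integrates to `0`
with `M` vanishing off `{M > 0}`. -/
theorem MeasureTheory.MeasurePreserving.setIntegral_partialSups_birkhoffSum_pos_nonneg
    (hT : MeasurePreserving T μ μ) (hgm : Measurable g) (hg : Integrable g μ) (n : ℕ) :
    0 ≤ ∫ x in {x | 0 < partialSups (birkhoffSum T g) n x}, g x ∂μ := by
  set M := partialSups (birkhoffSum T g) n
  set E := {x | 0 < M x}
  have hMm : Measurable M := measurable_partialSups (measurable_birkhoffSum hT.measurable hgm) n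
  have hMi : Integrable M μ := integrable_partialSups (integrable_birkhoffSum hT hg) n
  have hMTi : Integrable (M ∘ T) μ := hT.integrable_comp_of_integrable hMi
  have hM0 : 0 ≤ M := partialSups_birkhoffSum_nonneg T g n
  have hME : ∀ x ∈ E, M x - M (T x) ≤ g x := fun x (hx : 0 < M x) => by
    have := partialSups_birkhoffSum_le_max T g n x
    rw [max_def] at this
    split_ifs at this <;> linarith
  calc (0 : ℝ) = ∫ x, M x ∂μ - ∫ x, M (T x) ∂μ := by
        rw [← integral_map hT.aemeasurable hMm.aestronglyMeasurable, hT.map_eq, sub_self]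
    _ = ∫ x in E, M x ∂μ - ∫ x, M (T x) ∂μ := by
        rw [setIntegral_eq_integral_of_forall_compl_eq_zero (s := E) fun x hx =>
          le_antisymm (not_lt.mp hx) (hM0 x)]
    _ ≤ ∫ x in E, M x ∂μ - ∫ x in E, M (T x) ∂μ :=
        sub_le_sub_left (setIntegral_le_integral hMTi (Eventually.of_forall fun x => hM0 (T x))) _
    _ = ∫ x in E, (M x - M (T x)) ∂μ := (integral_sub hMi.integrableOn hMTi.integrableOn).symm
    _ ≤ ∫ x in E, g x ∂μ :=
        setIntegral_mono_on (hMi.sub hMTi).integrableOn hg.integrableOn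
          (measurableSet_lt measurable_const hMm) hME

theorem MeasureTheory.MeasurePreserving.setIntegral_exists_birkhoffSum_pos_nonneg
    (hT : MeasurePreserving T μ μ) (hgm : Measurable g) (hg : Integrable g μ) :
    0 ≤ ∫ x in {x | ∃ n, 0 < birkhoffSum T g n x}, g x ∂μ := by
  have hunion : {x | ∃ n, 0 < birkhoffSum T g n x}
      = ⋃ n, {x | 0 < partialSups (birkhoffSum T g) n x} := by
    ext x
    simp only [Set.mem_ofPred_eq, Set.mem_iUnion]
    refine ⟨fun ⟨n, hn⟩ => ⟨n, hn.trans_le (le_partialSups (birkhoffSum T g) n x)⟩,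
      fun ⟨n, hn⟩ => ?_⟩
    by_contra! h
    exact hn.not_ge (by rw [Pi.partialSups_apply]; exact partialSups_le _ _ _ fun k _ => h k)
  have hmeas : ∀ n, MeasurableSet {x | 0 < partialSups (birkhoffSum T g) n x} := fun n =>
    measurableSet_lt measurable_const
      (measurable_partialSups (measurable_birkhoffSum hT.measurable hgm) n)
  have hmono : Monotone fun n => {x | 0 < partialSups (birkhoffSum T g) n x} :=
    fun m n hmn x hx => lt_of_lt_of_le hx (partialSups_monotone (birkhoffSum T g) hmn x)
  rw [hunion]
  exact ge_of_tendsto' (tendsto_setIntegral_of_monotone hmeas hmono hg.integrableOn)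
    (hT.setIntegral_partialSups_birkhoffSum_pos_nonneg hgm hg)

end MaximalErgodic

lemma limsup_eq_of_tendsto_sub {ι : Type*} {l : Filter ι} [l.NeBot] {u v : ι → ℝ}
    (hu : IsBoundedUnder (· ≤ ·) l u) (hu' : IsBoundedUnder (· ≥ ·) l u)
    (h : Tendsto (v - u) l (𝓝 0)) :
    limsup v l = limsup u l := by
  have hv : v = u + (v - u) := by abel
  have hcob := h.isBoundedUnder_ge.isCoboundedUnder_le
  apply le_antisymm
  · calc limsup v l = limsup (u + (v - u)) l := by rw [← hv]
      _ ≤ limsup u l + limsup (v - u) l :=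
          limsup_add_le hu' hu hcob h.isBoundedUnder_le
      _ = limsup u l := by rw [h.limsup_eq, add_zero]
  · calc limsup u l = limsup u l + liminf (v - u) l := by rw [h.liminf_eq, add_zero]
      _ ≤ limsup (u + (v - u)) l :=
          le_limsup_add hu hu'.isCoboundedUnder_le h.isBoundedUnder_le h.isBoundedUnder_ge
      _ = limsup v l := by rw [← hv]

section Birkhoff

variable {α : Type*} {T : α → α} {f : α → ℝ} {C : ℝ}

lemma abs_birkhoffAverage_le (hC : ∀ x, |f x| ≤ C) (n : ℕ) (x : α) :
    |birkhoffAverage ℝ T f n x| ≤ C := by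
  rcases n.eq_zero_or_pos with rfl | hn
  · simpa using (abs_nonneg _).trans (hC x)
  have hsum : |birkhoffSum T f n x| ≤ n * C := by
    calc |birkhoffSum T f n x| ≤ ∑ i ∈ Finset.range n, |f (T^[i] x)| :=
          Finset.abs_sum_le_sum_abs _ _
      _ ≤ n * C := by
          simpa using Finset.sum_le_card_nsmul (Finset.range n) _ C fun i _ => hC (T^[i] x)
  rw [birkhoffAverage, smul_eq_mul, abs_mul, abs_inv, Nat.abs_cast,
    inv_mul_le_iff₀ (by exact_mod_cast hn)]
  exact hsum

lemma limsup_birkhoffAverage_apply_eq (hC : ∀ x, |f x| ≤ C) (x : α) :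
    limsup (birkhoffAverage ℝ T f · (T x)) atTop
      = limsup (birkhoffAverage ℝ T f · x) atTop := by
  have hb : ∀ n, |birkhoffAverage ℝ T f n x| ≤ C := fun n => abs_birkhoffAverage_le hC n x
  refine limsup_eq_of_tendsto_sub (isBoundedUnder_of ⟨C, fun n => (abs_le.1 (hb n)).2⟩)
    (isBoundedUnder_of ⟨-C, fun n => (abs_le.1 (hb n)).1⟩) ?_
  exact tendsto_birkhoffAverage_apply_sub_birkhoffAverage' ℝ
    (isBounded_iff_forall_norm_le.2 ⟨C, by rintro _ ⟨y, rfl⟩; exact hC y⟩) T x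

lemma exists_birkhoffSum_sub_pos_of_lt_limsup (hC : ∀ x, |f x| ≤ C) {c : ℝ} {x : α}
    (hx : c < limsup (birkhoffAverage ℝ T f · x) atTop) :
    ∃ n, 0 < birkhoffSum T (f - fun _ => c) n x := by
  have hcob : IsCoboundedUnder (· ≤ ·) atTop (birkhoffAverage ℝ T f · x) :=
    isBoundedUnder_of ⟨-C, fun n => (abs_le.1 (abs_birkhoffAverage_le hC n x)).1⟩
      |>.isCoboundedUnder_le
  obtain ⟨n, hn, hn1⟩ :=
    ((frequently_lt_of_lt_limsup hcob hx).and_eventually (eventually_ge_atTop 1)).exists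
  rw [birkhoffAverage, smul_eq_mul, lt_inv_mul_iff₀ (by exact_mod_cast hn1)] at hn
  refine ⟨n, ?_⟩
  rw [birkhoffSum_sub, sub_pos]
  simpa [birkhoffSum] using hn

variable [MeasurableSpace α] {μ : Measure α} [IsProbabilityMeasure μ]

/-- The set where the limsup exceeds `c` is invariant, hence null or conull; if it were conull,
the maximal ergodic theorem applied to `f - c` would give `c ≤ ∫ f`. -/
theorem Ergodic.ae_limsup_birkhoffAverage_le_of_integral_lt (hT : Ergodic T μ)
    (hf : Measurable f) (hC : ∀ x, |f x| ≤ C) {c : ℝ} (hc : ∫ x, f x ∂μ < c) :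
    ∀ᵐ x ∂μ, limsup (birkhoffAverage ℝ T f · x) atTop ≤ c := by
  have hfi : Integrable f μ := Integrable.of_bound hf.aestronglyMeasurable C (ae_of_all _ hC)
  set A := {x | c < limsup (birkhoffAverage ℝ T f · x) atTop}
  have hA : MeasurableSet A := measurableSet_lt measurable_const <| Measurable.limsup fun n =>
    (measurable_birkhoffSum hT.measurable hf n).const_smul ((n : ℝ)⁻¹)
  have hTA : T ⁻¹' A = A := by
    ext x
    simp only [A, Set.mem_preimage, Set.mem_ofPred_eq, limsup_birkhoffAverage_apply_eq hC]
  rcases hT.measure_self_or_compl_eq_zero hA hTA with hA0 | hAc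
  · exact (measure_eq_zero_iff_ae_notMem.1 hA0).mono fun x hx => not_lt.1 hx
  have hmax := hT.toMeasurePreserving.setIntegral_exists_birkhoffSum_pos_nonneg
    (hf.sub measurable_const) (hfi.sub (integrable_const c))
  have hAE : A ⊆ {x | ∃ n, 0 < birkhoffSum T (f - fun _ => c) n x} := fun x hx =>
    exists_birkhoffSum_sub_pos_of_lt_limsup hC hx
  have hEuniv := ae_eq_univ.2 (measure_mono_null (Set.compl_subset_compl.2 hAE) hAc)
  rw [setIntegral_congr_set hEuniv, setIntegral_univ,
    integral_sub' hfi (integrable_const c)] at hmax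
  simp at hmax
  linarith

theorem Ergodic.ae_limsup_birkhoffAverage_le (hT : Ergodic T μ) (hf : Measurable f)
    (hC : ∀ x, |f x| ≤ C) :
    ∀ᵐ x ∂μ, limsup (birkhoffAverage ℝ T f · x) atTop ≤ ∫ x, f x ∂μ := by
  have hall := ae_all_iff.2 fun k : ℕ =>
    hT.ae_limsup_birkhoffAverage_le_of_integral_lt hf hC (c := ∫ x, f x ∂μ + 1 / (k + 1))
      (lt_add_of_pos_right _ (by positivity))
  filter_upwards [hall] with x hx
  refine ge_of_tendsto' (x := atTop) ?_ hx
  simpa using tendsto_one_div_add_atTop_nhds_zero_nat.const_add (∫ x, f x ∂μ)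

theorem Ergodic.ae_tendsto_birkhoffAverage (hT : Ergodic T μ) (hf : Measurable f)
    (hC : ∀ x, |f x| ≤ C) :
    ∀ᵐ x ∂μ, Tendsto (birkhoffAverage ℝ T f · x) atTop (𝓝 (∫ x, f x ∂μ)) := by
  have hneg := hT.ae_limsup_birkhoffAverage_le hf.neg (fun x => by simpa using hC x)
  filter_upwards [hT.ae_limsup_birkhoffAverage_le hf hC, hneg] with x hle hge
  have hb : ∀ g : α → ℝ, (∀ x, |g x| ≤ C) →
      IsBoundedUnder (· ≤ ·) atTop (birkhoffAverage ℝ T g · x) := fun g hg =>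
    isBoundedUnder_of ⟨C, fun n => (abs_le.1 (abs_birkhoffAverage_le hg n x)).2⟩
  refine tendsto_order.2 ⟨fun b hb' => ?_, fun b hb' =>
    eventually_lt_of_limsup_lt (hle.trans_lt hb') (hb f hC)⟩
  simp only [Pi.neg_apply, integral_neg] at hge
  filter_upwards [eventually_lt_of_limsup_lt (hge.trans_lt (neg_lt_neg hb'))
    (hb _ fun x => by simpa using hC x)] with n hn
  simp only [birkhoffAverage_neg, Pi.neg_apply] at hn
  linarith

end Birkhoff

theorem MeasureTheory.ProbabilityMeasure.tendsto_of_forall_integral_tendsto_of_dense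
    {Ω ι : Type*} [MeasurableSpace Ω] [TopologicalSpace Ω] [OpensMeasurableSpace Ω]
    {L : Filter ι} {μs : ι → ProbabilityMeasure Ω} {μ : ProbabilityMeasure Ω}
    {D : Set (Ω →ᵇ ℝ)} (hD : Dense D)
    (h : ∀ f ∈ D, Tendsto (fun i => ∫ ω, f ω ∂(μs i : Measure Ω)) L
      (𝓝 (∫ ω, f ω ∂(μ : Measure Ω)))) :
    Tendsto μs L (𝓝 μ) := by
  have hlip (ν : ProbabilityMeasure Ω) :
      LipschitzWith 1 fun f : Ω →ᵇ ℝ => ∫ ω, f ω ∂(ν : Measure Ω) :=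
    LipschitzWith.of_dist_le_mul fun f g => by
      rw [Real.dist_eq, ← integral_sub (f.integrable _) (g.integrable _), NNReal.coe_one, one_mul,
        dist_eq_norm]
      simpa using (f - g).norm_integral_le_norm (ν : Measure Ω)
  have hclosed : IsClosed {f : Ω →ᵇ ℝ |
      Tendsto (fun i => ∫ ω, f ω ∂(μs i : Measure Ω)) L
        (𝓝 (∫ ω, f ω ∂(μ : Measure Ω)))} :=
    (LipschitzWith.uniformEquicontinuous _ 1 fun i => hlip (μs i)).equicontinuous
      |>.isClosed_setOfPred_tendsto (hlip μ).continuous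
  rw [ProbabilityMeasure.tendsto_iff_forall_integral_tendsto]
  exact fun f => hclosed.closure_subset_iff.2 h (hD f)

section Empirical

variable {X : Type*} [MeasurableSpace X]

/-- Indexed so that it charges the `n + 1` points `x, …, T^[n] x` and is a probability measure
for every `n`. -/
noncomputable def empiricalMeasure (T : X → X) (x : X) (n : ℕ) : ProbabilityMeasure X :=
  ⟨((n + 1 : ℝ≥0∞))⁻¹ • ∑ i ∈ Finset.range (n + 1), Measure.dirac (T^[i] x), by
    constructor
    simp [ENNReal.inv_mul_cancel]⟩

lemma toMeasure_empiricalMeasure (T : X → X) (x : X) (n : ℕ) :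
    (empiricalMeasure T x n : Measure X)
      = ((n + 1 : ℝ≥0∞))⁻¹ • ∑ i ∈ Finset.range (n + 1), Measure.dirac (T^[i] x) :=
  rfl

lemma integral_empiricalMeasure {T : X → X} {g : X → ℝ} (hg : Measurable g) (x : X)
    (n : ℕ) :
    ∫ y, g y ∂(empiricalMeasure T x n : Measure X) = birkhoffAverage ℝ T g (n + 1) x := by
  have hgs := hg.stronglyMeasurable
  rw [toMeasure_empiricalMeasure, integral_smul_measure,
    integral_finsetSum_measure fun i _ => integrable_dirac' hgs (by simp)]
  simp [integral_dirac' _ _ hgs, birkhoffAverage, birkhoffSum, ENNReal.toReal_add]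

lemma measureReal_prod_empiricalMeasure {T : X → X} {U : Set (X × X)} (hU : MeasurableSet U)
    (x : X) (n : ℕ) :
    ((empiricalMeasure T x n).prod (empiricalMeasure T x n) : Measure (X × X)).real U
      = ((n + 1 : ℝ) ^ 2)⁻¹ * ∑ i ∈ Finset.range (n + 1), ∑ j ∈ Finset.range (n + 1),
          U.indicator (fun _ => 1) (T^[i] x, T^[j] x) := by
  have hind : Measurable (U.indicator (1 : X × X → ℝ)) := measurable_const.indicator hU
  rw [← integral_indicator_one hU, ProbabilityMeasure.toMeasure_prod,
    integral_prod _ ((integrable_const 1).indicator hU)]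
  have hinner (a : X) : ∫ b, U.indicator 1 (a, b) ∂(empiricalMeasure T x n : Measure X)
      = birkhoffAverage ℝ T (fun b => U.indicator 1 (a, b)) (n + 1) x :=
    integral_empiricalMeasure (hind.comp measurable_prodMk_left) x n
  have houter :
      Measurable fun a => birkhoffAverage ℝ T (fun b => U.indicator 1 (a, b)) (n + 1) x :=
    (Finset.measurable_sum _ fun j _ =>
      hind.comp (measurable_id.prodMk measurable_const)).const_smul _
  simp_rw [hinner, integral_empiricalMeasure houter]
  simp only [birkhoffAverage, birkhoffSum, smul_eq_mul, Finset.mul_sum, Nat.cast_add_one, sq,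
    mul_inv, mul_assoc]
  rfl

variable [MetricSpace X] [CompactSpace X] [BorelSpace X]

theorem Ergodic.ae_tendsto_empiricalMeasure {μ : Measure X} [IsProbabilityMeasure μ] {T : X → X}
    (hT : Ergodic T μ) :
    ∀ᵐ x ∂μ, Tendsto (empiricalMeasure T x) atTop (𝓝 ⟨μ, ‹_›⟩) := by
  have : TopologicalSpace.SeparableSpace (X →ᵇ ℝ) :=
    (ContinuousMap.isometryEquivBoundedOfCompact X ℝ).surjective.denseRange.separableSpace
      (ContinuousMap.isometryEquivBoundedOfCompact X ℝ).continuous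
  obtain ⟨D, hDc, hD⟩ := TopologicalSpace.exists_countable_dense (X →ᵇ ℝ)
  have hbirkhoff : ∀ᵐ x ∂μ, ∀ f ∈ D,
      Tendsto (fun n => ∫ y, f y ∂(empiricalMeasure T x n : Measure X)) atTop
        (𝓝 (∫ y, f y ∂μ)) := by
    refine (ae_ball_iff hDc).2 fun f _ => ?_
    filter_upwards [hT.ae_tendsto_birkhoffAverage f.continuous.measurable
      fun y => (Real.norm_eq_abs (f y)).symm.trans_le (f.norm_coe_le_norm y)] with x hx
    simp_rw [integral_empiricalMeasure f.continuous.measurable]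
    exact hx.comp (tendsto_add_atTop_nat 1)
  filter_upwards [hbirkhoff] with x hx
  exact ProbabilityMeasure.tendsto_of_forall_integral_tendsto_of_dense hD hx

end Empirical

lemma Finset.sum_Icc_one_eq_sum_range {M : Type*} [AddCommMonoid M] (f : ℕ → M) (n : ℕ) :
    ∑ i ∈ Finset.Icc 1 n, f i = ∑ i ∈ Finset.range n, f (i + 1) := by
  rw [← Finset.Ico_add_one_right_eq_Icc, Finset.sum_Ico_eq_sum_range]
  simp [add_comm]

theorem stmt_4 {X : Type*} [MetricSpace X] [CompactSpace X] [MeasurableSpace X] [BorelSpace X]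
    (μ : Measure X) [IsProbabilityMeasure μ] (T : X → X) (hT : Ergodic T μ)
    (U : Set (X × X)) (hU : MeasurableSet U)
    (hbd : (μ.prod μ) (frontier U) = 0) :
    ∀ᵐ x ∂μ, Tendsto (fun n : ℕ => ((n : ℝ) ^ 2)⁻¹ *
        ∑ i ∈ Finset.Icc 1 n, ∑ j ∈ Finset.Icc 1 n,
          Set.indicator U (fun _ => (1 : ℝ)) (T^[i] x, T^[j] x))
      atTop (𝓝 ((μ.prod μ) U).toReal) := by
  -- the sums over `Icc 1 n` run along the orbit of `T x`
  filter_upwards [hT.quasiMeasurePreserving.ae hT.ae_tendsto_empiricalMeasure] with x hx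
  have hprod : Tendsto (fun n => (empiricalMeasure T (T x) n).prod (empiricalMeasure T (T x) n))
      atTop (𝓝 (.prod ⟨μ, ‹_›⟩ ⟨μ, ‹_›⟩)) :=
    (ProbabilityMeasure.continuous_prod.tendsto _).comp (hx.prodMk_nhds hx)
  have hU' := ProbabilityMeasure.tendsto_measure_of_null_frontier_of_tendsto' hprod hbd
  rw [← tendsto_add_atTop_iff_nat 1]
  refine ((ENNReal.tendsto_toReal (measure_ne_top _ _)).comp hU').congr fun n => ?_
  rw [Function.comp_apply, ← measureReal_def, measureReal_prod_empiricalMeasure hU]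
  simp only [Finset.sum_Icc_one_eq_sum_range, Function.iterate_succ_apply]
  push_cast
  rfl
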